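/- In the reduction instance with q = |U| + 1 dummy bakers pinned to each location, no pure Nash equilibrium places two millers at the same location, and there exists a pure Nash equilibrium of coverage n + kq if and only if Maximum k-Coverage has a solution covering n items. Hence computing the pure Nash equilibrium with maximum coverage is NP-hard. -/
import Mathlib

set_option linter.unusedSectionVars false
set_option maxHeartbeats 1000000


open Finset

/-- Number of agents (bakers or millers) choosing location `ℓ`. -/
def cnt {A L : Type*} [Fintype A] [DecidableEq L] (f : A → L) (ℓ : L) : ℕ :=
  (Finset.univ.filter (fun a => f a = ℓ)).card

/-- Utility of baker `b`: millers at her location over bakers at her location. -/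
def bakerUtil {L B M : Type*} [Fintype B] [Fintype M] [DecidableEq L]
    (s : B → L) (t : M → L) (b : B) : ℚ :=
  (cnt t (s b) : ℚ) / (cnt s (s b) : ℚ)

/-- Utility of miller `m`: bakers at her location over millers at her location. -/
def millerUtil {L B M : Type*} [Fintype B] [Fintype M] [DecidableEq L]
    (s : B → L) (t : M → L) (m : M) : ℚ :=
  (cnt s (t m) : ℚ) / (cnt t (t m) : ℚ)

/-- Pure Nash equilibrium: no baker can strictly improve by a unilateral deviation
to a feasible location, and no miller can strictly improve by a unilateral
deviation to any location. -/
def isNE {L B M : Type*} [Fintype B] [Fintype M] [DecidableEq L] [DecidableEq B] [DecidableEq M]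
    (feas : B → Finset L) (s : B → L) (t : M → L) : Prop :=
  (∀ b : B, ∀ ℓ' ∈ feas b,
    bakerUtil (Function.update s b ℓ') t b ≤ bakerUtil s t b) ∧
  (∀ m : M, ∀ ℓ' : L,
    millerUtil s (Function.update t m ℓ') m ≤ millerUtil s t m)

/-- Coverage: the number of bakers sharing a location with at least one miller. -/
def coverage {L B M : Type*} [Fintype B] [Fintype M] [DecidableEq L]
    (s : B → L) (t : M → L) : ℕ :=
  (Finset.univ.filter (fun b : B => 0 < cnt t (s b))).card

section cntlemmas
variable {A L : Type*} [Fintype A] [DecidableEq L] [DecidableEq A] (f : A → L) (a : A) (ℓ ℓ' : L)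

lemma cnt_le_card : cnt f ℓ ≤ Fintype.card A := by
  classical simpa [cnt] using card_filter_le univ (fun a => f a = ℓ)

lemma cnt_pos_iff : 0 < cnt f ℓ ↔ ∃ a, f a = ℓ := by
  simp [cnt, card_pos, Finset.Nonempty]

lemma cnt_eq_zero (h : ∀ a, f a ≠ ℓ) : cnt f ℓ = 0 := by
  simp [cnt, filter_eq_empty_iff.2 (fun a _ => h a)]

lemma cnt_update_of_ne (h1 : f a ≠ ℓ) (h2 : ℓ' ≠ ℓ) :
    cnt (Function.update f a ℓ') ℓ = cnt f ℓ := by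
  unfold cnt
  congr 1
  apply filter_congr
  intro x _
  rcases eq_or_ne x a with rfl | hx
  · simp [Function.update_self, h1, h2]
  · simp [Function.update_of_ne hx]

lemma cnt_update_target (h1 : f a ≠ ℓ') :
    cnt (Function.update f a ℓ') ℓ' = cnt f ℓ' + 1 := by
  unfold cnt
  have : (univ.filter (fun x => Function.update f a ℓ' x = ℓ')) =
      insert a (univ.filter (fun x => f x = ℓ')) := by
    ext x
    rcases eq_or_ne x a with rfl | hx
    · simp
    · simp [Function.update_of_ne hx, hx]
  rw [this, card_insert_of_notMem (by simp [h1])]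

lemma cnt_update_source (h1 : f a = ℓ) (h2 : ℓ' ≠ ℓ) :
    cnt (Function.update f a ℓ') ℓ + 1 = cnt f ℓ := by
  unfold cnt
  have : (univ.filter (fun x => f x = ℓ)) =
      insert a (univ.filter (fun x => Function.update f a ℓ' x = ℓ)) := by
    ext x
    rcases eq_or_ne x a with rfl | hx
    · simp [h1]
    · simp [Function.update_of_ne hx, hx]
  rw [this, card_insert_of_notMem (by simp [h2])]

end cntlemmas

lemma cnt_inj_le {A L : Type*} [Fintype A] [DecidableEq A] [DecidableEq L] {f : A → L}
    (hf : Function.Injective f) (ℓ : L) : cnt f ℓ ≤ 1 := by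
  classical
  unfold cnt
  rw [Finset.card_le_one]
  intro a ha b hb
  simp [cnt] at ha hb
  exact hf (ha.trans hb.symm)

lemma cnt_inj_eq_one {A L : Type*} [Fintype A] [DecidableEq A] [DecidableEq L] {f : A → L}
    (hf : Function.Injective f) (a : A) : cnt f (f a) = 1 :=
  le_antisymm (cnt_inj_le hf _) ((cnt_pos_iff f (f a)).2 ⟨a, rfl⟩)

lemma card_filter_sum {A C : Type*} [Fintype A] [Fintype C] (P : A ⊕ C → Prop) [DecidablePred P] :
    (univ.filter P).card =
      (univ.filter (fun a => P (Sum.inl a))).card + (univ.filter (fun c => P (Sum.inr c))).card := by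
  rw [← Finset.univ_disjSum_univ, ← card_disjSum]
  congr 1
  ext x
  cases x <;> simp

section reduction
variable {U : Type*} [Fintype U] [DecidableEq U] {S : Finset (Finset U)}

lemma cnt_split (s : U ⊕ ({T // T ∈ S} × Fin (Fintype.card U + 1)) → {T // T ∈ S})
    (hdum : ∀ p, s (Sum.inr p) = p.1) (ℓ : {T // T ∈ S}) :
    cnt s ℓ = cnt (fun u => s (Sum.inl u)) ℓ + (Fintype.card U + 1) := by
  classical
  unfold cnt
  rw [card_filter_sum (fun b => s b = ℓ)]
  congr 1
  have h1 : (univ.filter (fun p : {T // T ∈ S} × Fin (Fintype.card U + 1) => s (Sum.inr p) = ℓ))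
      = univ.filter (fun p : {T // T ∈ S} × Fin (Fintype.card U + 1) => p.1 = ℓ) := by
    apply filter_congr; intro p _; simp [hdum p]
  rw [h1, ← Finset.univ_product_univ, Finset.filter_product_left (fun x => x = ℓ),
    Finset.card_product, Finset.filter_eq', if_pos (mem_univ ℓ)]
  simp

lemma cnt_bounds (s : U ⊕ ({T // T ∈ S} × Fin (Fintype.card U + 1)) → {T // T ∈ S})
    (hdum : ∀ p, s (Sum.inr p) = p.1) (ℓ : {T // T ∈ S}) :
    Fintype.card U + 1 ≤ cnt s ℓ ∧ cnt s ℓ ≤ 2 * Fintype.card U + 1 := by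
  have h := cnt_split s hdum ℓ
  have h2 : cnt (fun u => s (Sum.inl u)) ℓ ≤ Fintype.card U := cnt_le_card _ _
  omega

lemma ne_inj {k : ℕ} (hk : k ≤ S.card)
    (s : U ⊕ ({T // T ∈ S} × Fin (Fintype.card U + 1)) → {T // T ∈ S})
    (t : Fin k → {T // T ∈ S})
    (hs : ∀ b, s b ∈ Sum.elim
        (fun u : U => Finset.univ.filter (fun T : {T // T ∈ S} => u ∈ T.1))
        (fun p => ({p.1} : Finset {T // T ∈ S})) b)
    (hNE : isNE (Sum.elim
        (fun u : U => Finset.univ.filter (fun T : {T // T ∈ S} => u ∈ T.1))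
        (fun p => ({p.1} : Finset {T // T ∈ S}))) s t) :
    Function.Injective t := by
  classical
  intro m m' hmm
  by_contra hne
  have hdum : ∀ p, s (Sum.inr p) = p.1 := fun p => by simpa using hs (Sum.inr p)
  -- find an unoccupied location
  obtain ⟨ℓ', hℓ'⟩ : ∃ ℓ' : {T // T ∈ S}, ℓ' ∉ univ.image t := by
    by_contra hall
    push_neg at hall
    have hsub : (univ : Finset {T // T ∈ S}) ⊆ univ.image t := fun x _ => hall x
    have h1 : S.card ≤ (univ.image t).card := by
      calc S.card = Fintype.card {T // T ∈ S} := (Fintype.card_coe S).symm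
        _ = (univ : Finset {T // T ∈ S}).card := Finset.card_univ.symm
        _ ≤ _ := card_le_card hsub
    have h2 : (univ.image t).card ≤ k := by
      simpa using card_image_le (s := (univ : Finset (Fin k))) (f := t)
    have h3 : (univ.image t).card = (univ : Finset (Fin k)).card := by
      simp only [Finset.card_univ, Fintype.card_fin]; omega
    have := Finset.injOn_of_card_image_eq h3
    exact hne (this (mem_univ m) (mem_univ m') hmm)
  have hnotocc : ∀ m'', t m'' ≠ ℓ' := by
    intro m'' h
    exact hℓ' (mem_image.2 ⟨m'', mem_univ _, h⟩)
  have hcnt0 : cnt t ℓ' = 0 := cnt_eq_zero t ℓ' hnotocc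
  have hupd : cnt (Function.update t m ℓ') ℓ' = 1 := by
    rw [cnt_update_target t m ℓ' (hnotocc m), hcnt0]
  have hNE2 := hNE.2 m ℓ'
  rw [millerUtil, millerUtil, Function.update_self, hupd] at hNE2
  have h2le : 2 ≤ cnt t (t m) := by
    have hsub2 : ({m, m'} : Finset (Fin k)) ⊆ univ.filter (fun x => t x = t m) := by
      intro x hx
      simp only [mem_insert, mem_singleton] at hx
      rcases hx with rfl | rfl <;> simp [hmm]
    calc 2 = ({m, m'} : Finset (Fin k)).card := (Finset.card_pair hne).symm
      _ ≤ _ := card_le_card hsub2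
  have hq1 := (cnt_bounds s hdum ℓ').1
  have hq2 := (cnt_bounds s hdum (t m)).2
  -- numeric contradiction
  have hpos : (0:ℚ) < 2 := by norm_num
  have hd : (2:ℚ) ≤ (cnt t (t m) : ℚ) := by exact_mod_cast h2le
  have hnum : (cnt s (t m) : ℚ) / (cnt t (t m) : ℚ) ≤ (cnt s (t m) : ℚ) / 2 :=
    div_le_div_of_nonneg_left (by positivity) hpos hd
  have hfinal : (cnt s ℓ' : ℚ) ≤ (cnt s (t m) : ℚ) / 2 := by
    calc (cnt s ℓ' : ℚ) = (cnt s ℓ' : ℚ) / 1 := by ring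
      _ ≤ _ := hNE2
      _ ≤ _ := hnum
  have : (2 : ℚ) * (cnt s ℓ') ≤ (cnt s (t m)) := by linarith
  have hnat : 2 * cnt s ℓ' ≤ cnt s (t m) := by exact_mod_cast this
  omega

end reduction
section construct
variable {U : Type*} [Fintype U] [DecidableEq U] {S : Finset (Finset U)}

lemma construct {k : ℕ} (hk : k ≤ S.card) (hcov : ∀ u : U, ∃ T ∈ S, u ∈ T)
    (S'' : Finset (Finset U)) (hsub : S'' ⊆ S) (hcard : S''.card = k)
    (hmax : ∀ Y ⊆ S, Y.card = k → (Y.biUnion id).card ≤ (S''.biUnion id).card) :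
    ∃ (s : U ⊕ ({T // T ∈ S} × Fin (Fintype.card U + 1)) → {T // T ∈ S})
      (t : Fin k → {T // T ∈ S}),
      (∀ b, s b ∈ Sum.elim
          (fun u : U => Finset.univ.filter (fun T : {T // T ∈ S} => u ∈ T.1))
          (fun p => ({p.1} : Finset {T // T ∈ S})) b) ∧
      isNE (Sum.elim
          (fun u : U => Finset.univ.filter (fun T : {T // T ∈ S} => u ∈ T.1))
          (fun p => ({p.1} : Finset {T // T ∈ S}))) s t ∧
      coverage s t = (S''.biUnion id).card + k * (Fintype.card U + 1) := by
  classical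
  set q := Fintype.card U + 1 with hq
  -- the millers' strategy: a bijection onto S''
  have hcardL : Fintype.card {x // x ∈ S''} = k := by rw [Fintype.card_coe, hcard]
  let e : Fin k ≃ {x // x ∈ S''} := (Fintype.equivFinOfCardEq hcardL).symm
  let t : Fin k → {T // T ∈ S} := fun m => ⟨(e m).1, hsub (e m).2⟩
  have ht_inj : Function.Injective t := by
    intro m m' h
    have hv : (t m).1 = (t m').1 := congrArg Subtype.val h
    exact e.injective (Subtype.ext hv)
  have ht_mem : ∀ m, (t m).1 ∈ S'' := fun m => (e m).2
  have ht_surj : ∀ ℓ : {T // T ∈ S}, ℓ.1 ∈ S'' → ∃ m, t m = ℓ := by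
    intro ℓ h
    exact ⟨e.symm ⟨ℓ.1, h⟩, by simp only [t, Equiv.apply_symm_apply]⟩
  have cnt_t : ∀ ℓ : {T // T ∈ S}, cnt t ℓ = if ℓ.1 ∈ S'' then 1 else 0 := by
    intro ℓ
    split_ifs with h
    · obtain ⟨m, rfl⟩ := ht_surj ℓ h
      exact cnt_inj_eq_one ht_inj m
    · exact cnt_eq_zero t ℓ (fun m hm => h (hm ▸ ht_mem m))
  -- the candidate strategies for the bakers
  set P : (U ⊕ ({T // T ∈ S} × Fin q) → {T // T ∈ S}) → Prop := fun s =>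
    (∀ u : U, u ∈ (s (Sum.inl u)).1 ∧ ((∃ T ∈ S'', u ∈ T) → (s (Sum.inl u)).1 ∈ S'')) ∧
    (∀ p, s (Sum.inr p) = p.1) with hP
  have hP0 : ∃ s₀, P s₀ := by
    refine ⟨Sum.elim (fun u => if h : ∃ T ∈ S'', u ∈ T
        then ⟨h.choose, hsub h.choose_spec.1⟩
        else ⟨(hcov u).choose, (hcov u).choose_spec.1⟩) (fun p => p.1), ?_, fun p => rfl⟩
    intro u
    by_cases h : ∃ T ∈ S'', u ∈ T
    · simp only [Sum.elim_inl, dif_pos h]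
      exact ⟨h.choose_spec.2, fun _ => h.choose_spec.1⟩
    · simp only [Sum.elim_inl, dif_neg h]
      exact ⟨(hcov u).choose_spec.2, fun h' => absurd h' h⟩
  set Φ : (U ⊕ ({T // T ∈ S} × Fin q) → {T // T ∈ S}) → ℕ :=
    fun s => ∑ ℓ : {T // T ∈ S}, (cnt s ℓ)^2 with hΦ
  obtain ⟨s, hsmem, hsmin⟩ :=
    Finset.exists_min_image (univ.filter P) Φ ⟨hP0.choose, mem_filter.2 ⟨mem_univ _, hP0.choose_spec⟩⟩
  rw [mem_filter] at hsmem
  obtain ⟨-, ⟨hitems, hdum⟩⟩ := hsmem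
  have hsmin' : ∀ s', P s' → Φ s ≤ Φ s' := fun s' h => hsmin s' (mem_filter.2 ⟨mem_univ _, h⟩)
  have hfeas : ∀ b, s b ∈ Sum.elim
      (fun u : U => Finset.univ.filter (fun T : {T // T ∈ S} => u ∈ T.1))
      (fun p => ({p.1} : Finset {T // T ∈ S})) b := by
    rintro (u | p)
    · simp [(hitems u).1]
    · simp [hdum p]
  refine ⟨s, t, hfeas, ⟨?_, ?_⟩, ?_⟩
  · -- bakers cannot improve
    rintro (u | p) ℓ' hℓ'
    · -- item bakers
      simp only [Sum.elim_inl, mem_filter] at hℓ'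
      set sb := s (Sum.inl u) with hsb
      rcases eq_or_ne ℓ' sb with rfl | hne
      · rw [Function.update_eq_self]
      by_cases hmem : sb.1 ∈ S''
      · -- currently covered
        by_cases hmem' : ℓ'.1 ∈ S''
        · -- deviation to another covered set
          rw [bakerUtil, bakerUtil, Function.update_self, ← hsb]
          rw [cnt_update_target s (Sum.inl u) ℓ' (by rw [← hsb]; exact hne.symm)]
          have hle : cnt s sb ≤ cnt s ℓ' + 1 := by
            by_contra hgt
            push_neg at hgt
            -- swap baker u to ℓ' decreases the potential
            set s' := Function.update s (Sum.inl u) ℓ' with hs'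
            have hPs' : P s' := by
              constructor
              · intro u'
                rcases eq_or_ne u' u with rfl | hu
                · rw [hs', Function.update_self]
                  exact ⟨hℓ'.2, fun _ => hmem'⟩
                · rw [hs', Function.update_of_ne (by simp [hu])]
                  exact hitems u'
              · intro p
                rw [hs', Function.update_of_ne (by simp)]
                exact hdum p
            have hΦlt : Φ s' < Φ s := by
              have h1 : cnt s' ℓ' = cnt s ℓ' + 1 :=
                cnt_update_target s (Sum.inl u) ℓ' (by rw [← hsb]; exact hne.symm)
              have h2 : cnt s' sb + 1 = cnt s sb :=
                cnt_update_source s (Sum.inl u) sb ℓ' hsb.symm hne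
              have h3 : ∀ ℓ ∈ (univ.erase sb).erase ℓ', cnt s' ℓ = cnt s ℓ := by
                intro ℓ hℓ
                rw [mem_erase, mem_erase] at hℓ
                exact cnt_update_of_ne s (Sum.inl u) ℓ ℓ'
                  (by rw [← hsb]; exact fun h => hℓ.2.1 h.symm) (fun h => hℓ.1 h.symm)
              have hsplit : ∀ g : {T // T ∈ S} → ℕ,
                  ∑ ℓ, g ℓ = g sb + (g ℓ' + ∑ ℓ ∈ (univ.erase sb).erase ℓ', g ℓ) := by
                intro g
                rw [← Finset.add_sum_erase _ g (mem_univ sb),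
                  ← Finset.add_sum_erase _ g (mem_erase.2 ⟨hne, mem_univ ℓ'⟩)]
              rw [hΦ]
              simp only
              rw [hsplit (fun ℓ => (cnt s ℓ)^2), hsplit (fun ℓ => (cnt s' ℓ)^2)]
              have h4 : ∑ ℓ ∈ (univ.erase sb).erase ℓ', (cnt s' ℓ)^2
                  = ∑ ℓ ∈ (univ.erase sb).erase ℓ', (cnt s ℓ)^2 :=
                Finset.sum_congr rfl (fun ℓ hℓ => by rw [h3 ℓ hℓ])
              rw [h4, h1]
              have := h2
              nlinarith [h2, hgt]
            exact absurd (hsmin' s' hPs') (by omega)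
          -- conclude the utility inequality
          rw [cnt_t ℓ', if_pos hmem', cnt_t sb, if_pos hmem]
          have hpos : 0 < cnt s sb := by have := (cnt_bounds s hdum sb).1; omega
          have h0 : (0:ℚ) < (cnt s sb : ℚ) := by exact_mod_cast hpos
          have h1 : (cnt s sb : ℚ) ≤ (cnt s ℓ' : ℚ) + 1 := by exact_mod_cast hle
          push_cast
          exact one_div_le_one_div_of_le h0 h1
        · -- deviation to an uncovered set: utility zero
          rw [bakerUtil, bakerUtil, Function.update_self, ← hsb, cnt_t ℓ', if_neg hmem']
          have : (0:ℚ) ≤ (cnt t sb : ℚ) / (cnt s sb : ℚ) := by positivity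
          simpa using this
      · -- currently uncovered: u is covered by no set of S''
        have huncov : ¬ ∃ T ∈ S'', u ∈ T := fun h => hmem ((hitems u).2 h)
        have hℓ'uncov : ℓ'.1 ∉ S'' := fun h => huncov ⟨ℓ'.1, h, hℓ'.2⟩
        rw [bakerUtil, bakerUtil, Function.update_self, ← hsb, cnt_t ℓ', if_neg hℓ'uncov]
        have : (0:ℚ) ≤ (cnt t sb : ℚ) / (cnt s sb : ℚ) := by positivity
        simpa using this
    · -- dummy bakers: only feasible location is the current one
      simp only [Sum.elim_inr, mem_singleton] at hℓ'
      subst hℓ'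
      rw [← hdum p, Function.update_eq_self]
  · -- millers cannot improve
    intro m ℓ'
    rcases eq_or_ne ℓ' (t m) with rfl | hne
    · rw [Function.update_eq_self]
    rw [millerUtil, millerUtil, Function.update_self,
      cnt_update_target t m ℓ' (fun h => hne h.symm), cnt_t (t m), if_pos (ht_mem m)]
    have hbnd := cnt_bounds s hdum
    by_cases hmem' : ℓ'.1 ∈ S''
    · rw [cnt_t ℓ', if_pos hmem']
      have h1 : cnt s ℓ' ≤ 2 * cnt s (t m) := by
        have := (hbnd ℓ').2; have := (hbnd (t m)).1; omega
      rw [div_le_div_iff₀ (by norm_num) (by norm_num)]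
      have : (cnt s ℓ' : ℚ) ≤ 2 * (cnt s (t m) : ℚ) := by exact_mod_cast h1
      push_cast
      linarith
    · rw [cnt_t ℓ', if_neg hmem']
      have hle : cnt s ℓ' ≤ cnt s (t m) := by
        by_contra hgt
        push_neg at hgt
        -- swap argument on coverage
        set T₁ := (t m).1 with hT₁
        set T₂ := ℓ'.1 with hT₂
        set Y := insert T₂ (S''.erase T₁) with hY
        have hkpos : 0 < k := by
          rcases Nat.eq_zero_or_pos k with rfl | h
          · exact absurd m.isLt (by omega)
          · exact h
        have hT₂notS'' : T₂ ∉ S'' := hmem'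
        have hYsub : Y ⊆ S := by
          rw [hY]
          exact insert_subset ℓ'.2 ((erase_subset _ _).trans hsub)
        have hYcard : Y.card = k := by
          rw [hY, card_insert_of_notMem (fun h => hT₂notS'' (mem_of_mem_erase h)),
            card_erase_of_mem (ht_mem m), hcard]
          omega
        -- covered items lost ⊆ items assigned to t m
        have hclaim1 : (S''.biUnion id) \ (Y.biUnion id) ⊆
            univ.filter (fun u => s (Sum.inl u) = t m) := by
          intro u hu
          rw [mem_sdiff] at hu
          obtain ⟨hu1, hu2⟩ := hu
          rw [mem_biUnion] at hu1
          obtain ⟨T, hT, huT⟩ := hu1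
          have hcov' : (s (Sum.inl u)).1 ∈ S'' := (hitems u).2 ⟨T, hT, huT⟩
          have heq : (s (Sum.inl u)).1 = T₁ := by
            by_contra hne'
            refine hu2 (mem_biUnion.2 ⟨(s (Sum.inl u)).1, ?_, (hitems u).1⟩)
            rw [hY]
            exact mem_insert_of_mem (mem_erase.2 ⟨hne', hcov'⟩)
          simp only [mem_filter, mem_univ, true_and]
          exact Subtype.ext heq
        -- items gained ⊇ items assigned to ℓ'
        have hclaim2 : univ.filter (fun u => s (Sum.inl u) = ℓ') ⊆
            (Y.biUnion id) \ (S''.biUnion id) := by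
          intro u hu
          simp only [mem_filter, mem_univ, true_and] at hu
          rw [mem_sdiff]
          constructor
          · refine mem_biUnion.2 ⟨T₂, mem_insert_self _ _, ?_⟩
            rw [hT₂, ← hu]
            exact (hitems u).1
          · intro hA
            rw [mem_biUnion] at hA
            obtain ⟨T, hT, huT⟩ := hA
            have := (hitems u).2 ⟨T, hT, huT⟩
            rw [hu] at this
            exact hmem' this
        -- now compare cardinalities
        have hxm : cnt (fun u => s (Sum.inl u)) (t m) =
            (univ.filter (fun u => s (Sum.inl u) = t m)).card := rfl
        have hxl : cnt (fun u => s (Sum.inl u)) ℓ' =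
            (univ.filter (fun u => s (Sum.inl u) = ℓ')).card := rfl
        have hxlt : cnt (fun u => s (Sum.inl u)) (t m) < cnt (fun u => s (Sum.inl u)) ℓ' := by
          have h1 := cnt_split s hdum (t m)
          have h2 := cnt_split s hdum ℓ'
          omega
        have hAcard : (S''.biUnion id).card < (Y.biUnion id).card := by
          have h5 : ((S''.biUnion id) ∩ (Y.biUnion id)).card
              + ((S''.biUnion id) \ (Y.biUnion id)).card = (S''.biUnion id).card :=
            Finset.card_inter_add_card_sdiff _ _
          have h6 : ((S''.biUnion id) \ (Y.biUnion id)).card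
              ≤ cnt (fun u => s (Sum.inl u)) (t m) := by
            rw [hxm]; exact card_le_card hclaim1
          have h7 : cnt (fun u => s (Sum.inl u)) ℓ'
              ≤ ((Y.biUnion id) \ (S''.biUnion id)).card := by
            rw [hxl]; exact card_le_card hclaim2
          have h8 : ((S''.biUnion id) ∩ (Y.biUnion id)).card
              + ((Y.biUnion id) \ (S''.biUnion id)).card ≤ (Y.biUnion id).card := by
            rw [← Finset.card_union_of_disjoint]
            · exact card_le_card (union_subset (inter_subset_right)
                (sdiff_subset))
            · exact Finset.disjoint_left.2
                (fun a ha hb => (mem_sdiff.1 hb).2 (mem_inter.1 ha).1)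
          omega
        exact absurd (hmax Y hYsub hYcard) (by omega)
      have : (cnt s ℓ' : ℚ) ≤ (cnt s (t m) : ℚ) := by exact_mod_cast hle
      calc (cnt s ℓ' : ℚ) / ((0:ℕ) + 1 : ℕ) = (cnt s ℓ' : ℚ) := by norm_num
        _ ≤ (cnt s (t m) : ℚ) := this
        _ = (cnt s (t m) : ℚ) / 1 := by ring
  · -- coverage computation
    unfold coverage
    rw [card_filter_sum (fun b => 0 < cnt t (s b))]
    have hcond : ∀ ℓ : {T // T ∈ S}, (0 < cnt t ℓ) ↔ (ℓ.1 ∈ S'') := by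
      intro ℓ
      rw [cnt_t ℓ]
      split_ifs with h <;> simp [h]
    congr 1
    · -- item bakers
      have hset : univ.filter (fun u => 0 < cnt t (s (Sum.inl u))) = S''.biUnion id := by
        ext u
        simp only [mem_filter, mem_univ, true_and]
        rw [hcond]
        constructor
        · intro h
          exact mem_biUnion.2 ⟨(s (Sum.inl u)).1, h, (hitems u).1⟩
        · intro h
          obtain ⟨T, hT, huT⟩ := mem_biUnion.1 h
          exact (hitems u).2 ⟨T, hT, huT⟩
      rw [hset]
    · -- dummy bakers
      have hset : univ.filter (fun p : {T // T ∈ S} × Fin q => 0 < cnt t (s (Sum.inr p)))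
          = univ.filter (fun p : {T // T ∈ S} × Fin q => p.1.1 ∈ S'') := by
        apply filter_congr
        intro p _
        rw [hdum p]
        simp [hcond p.1]
      have hLcard : (univ.filter (fun ℓ : {T // T ∈ S} => ℓ.1 ∈ S'')).card = k := by
        rw [← hcard]
        apply Finset.card_bij (fun ℓ _ => ℓ.1)
        · intro a ha; exact (mem_filter.1 ha).2
        · intro a _ b _ h; exact Subtype.ext h
        · intro T hT; exact ⟨⟨T, hsub hT⟩, mem_filter.2 ⟨mem_univ _, hT⟩, rfl⟩
      rw [hset, ← Finset.univ_product_univ,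
        Finset.filter_product_left (fun ℓ : {T // T ∈ S} => ℓ.1 ∈ S''),
        Finset.card_product, hLcard]
      simp [q]

end construct

/-- in the reduction instance augmented with `q = |U| + 1` dummy bakers
pinned to each location, no pure Nash equilibrium places two millers at the same
location, and there is a pure Nash equilibrium of coverage at least `n + k·q` iff
Maximum `k`-Coverage has a solution covering at least `n` items. -/
theorem optimal_ne_reduction {U : Type*} [Fintype U] [DecidableEq U]
    (S : Finset (Finset U)) (k : ℕ) (hk : k ≤ S.card)
    (hcov : ∀ u : U, ∃ T ∈ S, u ∈ T) (n : ℕ) :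
    (∀ (s : U ⊕ ({T // T ∈ S} × Fin (Fintype.card U + 1)) → {T // T ∈ S})
       (t : Fin k → {T // T ∈ S}),
      (∀ b, s b ∈ Sum.elim
          (fun u : U => Finset.univ.filter (fun T : {T // T ∈ S} => u ∈ T.1))
          (fun p => ({p.1} : Finset {T // T ∈ S})) b) →
      isNE (Sum.elim
          (fun u : U => Finset.univ.filter (fun T : {T // T ∈ S} => u ∈ T.1))
          (fun p => ({p.1} : Finset {T // T ∈ S}))) s t →
      Function.Injective t) ∧
    ((∃ (s : U ⊕ ({T // T ∈ S} × Fin (Fintype.card U + 1)) → {T // T ∈ S})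
        (t : Fin k → {T // T ∈ S}),
      (∀ b, s b ∈ Sum.elim
          (fun u : U => Finset.univ.filter (fun T : {T // T ∈ S} => u ∈ T.1))
          (fun p => ({p.1} : Finset {T // T ∈ S})) b) ∧
      isNE (Sum.elim
          (fun u : U => Finset.univ.filter (fun T : {T // T ∈ S} => u ∈ T.1))
          (fun p => ({p.1} : Finset {T // T ∈ S}))) s t ∧
      n + k * (Fintype.card U + 1) ≤ coverage s t) ↔
    (∃ S' ⊆ S, S'.card = k ∧ n ≤ (S'.biUnion id).card)) := by
  classical
  constructor
  · intro s t hs hNE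
    exact ne_inj hk s t hs hNE
  · constructor
    · rintro ⟨s, t, hs, hNE, hcovge⟩
      have tinj := ne_inj hk s t hs hNE
      have hdum : ∀ p, s (Sum.inr p) = p.1 := fun p => by simpa using hs (Sum.inr p)
      have hitem : ∀ u, u ∈ (s (Sum.inl u)).1 := fun u => by simpa using hs (Sum.inl u)
      refine ⟨univ.image (fun m => (t m).1), ?_, ?_, ?_⟩
      · intro T hT
        obtain ⟨m, -, rfl⟩ := mem_image.1 hT
        exact (t m).2
      · have hinj : Function.Injective (fun m => (t m).1) :=
          fun a b h => tinj (Subtype.ext h)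
        rw [Finset.card_image_of_injective _ hinj]
        simp
      · -- n ≤ covered items ≤ card of union
        have hdecomp := card_filter_sum (fun b => 0 < cnt t (s b))
        rw [coverage] at hcovge
        -- dummy part is at most k * q
        have hdummy : (univ.filter (fun p : {T // T ∈ S} × Fin (Fintype.card U + 1) =>
            0 < cnt t (s (Sum.inr p)))).card ≤ k * (Fintype.card U + 1) := by
          have hset : univ.filter (fun p : {T // T ∈ S} × Fin (Fintype.card U + 1) =>
              0 < cnt t (s (Sum.inr p)))
              = univ.filter (fun p : {T // T ∈ S} × Fin (Fintype.card U + 1) =>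
                0 < cnt t p.1) := by
            apply filter_congr
            intro p _
            rw [hdum p]
          rw [hset, ← Finset.univ_product_univ,
            Finset.filter_product_left (fun ℓ : {T // T ∈ S} => 0 < cnt t ℓ),
            Finset.card_product]
          have hocc : (univ.filter (fun ℓ : {T // T ∈ S} => 0 < cnt t ℓ)).card ≤ k := by
            have hsub2 : univ.filter (fun ℓ : {T // T ∈ S} => 0 < cnt t ℓ) ⊆ univ.image t := by
              intro ℓ hℓ
              obtain ⟨m, hm⟩ := (cnt_pos_iff t ℓ).1 (mem_filter.1 hℓ).2
              exact mem_image.2 ⟨m, mem_univ _, hm⟩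
            calc _ ≤ (univ.image t).card := card_le_card hsub2
              _ ≤ (univ : Finset (Fin k)).card := card_image_le
              _ = k := by simp
          have : ((univ : Finset (Fin (Fintype.card U + 1)))).card = Fintype.card U + 1 := by simp
          rw [this]
          exact Nat.mul_le_mul_right _ hocc
        -- item part is at most the size of the union
        have hitems' : (univ.filter (fun u : U => 0 < cnt t (s (Sum.inl u)))).card
            ≤ (((univ.image (fun m => (t m).1)) : Finset (Finset U)).biUnion id).card := by
          apply card_le_card
          intro u hu
          obtain ⟨m, hm⟩ := (cnt_pos_iff t (s (Sum.inl u))).1 (mem_filter.1 hu).2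
          refine mem_biUnion.2 ⟨(t m).1, mem_image.2 ⟨m, mem_univ _, rfl⟩, ?_⟩
          rw [hm]
          exact hitem u
        omega
    · rintro ⟨S', hS'sub, hS'card, hn⟩
      obtain ⟨S'', hS''mem, hS''max⟩ := Finset.exists_max_image (S.powersetCard k)
        (fun X => (X.biUnion id).card) ⟨S', Finset.mem_powersetCard.2 ⟨hS'sub, hS'card⟩⟩
      rw [Finset.mem_powersetCard] at hS''mem
      obtain ⟨s, t, h1, h2, h3⟩ := construct hk hcov S'' hS''mem.1 hS''mem.2
        (fun Y hY hYc => hS''max Y (Finset.mem_powersetCard.2 ⟨hY, hYc⟩))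
      refine ⟨s, t, h1, h2, ?_⟩
      have hbig : (S'.biUnion id).card ≤ (S''.biUnion id).card :=
        hS''max S' (Finset.mem_powersetCard.2 ⟨hS'sub, hS'card⟩)
      rw [h3]
      omega
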